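/- Let 𝒜 be a unital point-separating subalgebra of C([0,1],ℝ), q ∈ S¹ with lift q̃ ∈ [0,1), and m ∈ ℤ. The set of continuous f : S¹ → S¹ whose lift f̃_α lies in 𝒜 and satisfies f̃_α(0) = q̃, f̃_α(1) = q̃ + m is dense, in the metric d₀, in C_m^q(S¹,S¹). -/

import Mathlib

open Real unitInterval

/-- The exponential covering map `p(t) = (cos 2πt, sin 2πt)`, with the unit circle
realized as the unit circle `Circle` in `ℂ`. -/
noncomputable def p (t : ℝ) : Circle := Circle.exp (2 * π * t)

/-- The loop `α : [0,1] → S¹`, `α(t) = (cos 2πt, sin 2πt)`. -/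
noncomputable def α (t : unitInterval) : Circle := p t

/-
The lift of `f ∈ C_m^q` starts at `q̃` and ends at `q̃ + m`. Approximate it uniformly by an
element `h ∈ 𝒜` with the same endpoint values (Stone–Weierstrass, corrected by two interpolating
elements of `𝒜`). Since the endpoint values differ by an integer, `p ∘ h` descends along `α` to a map
`g : S¹ → S¹`; by uniqueness of lifts for the covering map `p`, the lift of `g` is `h` itself.
-/

open Topology

theorem ContinuousMap.exists_mem_subalgebra_near_agreeing_at {X : Type*}
    [TopologicalSpace X] [CompactSpace X] (A : Subalgebra ℝ C(X, ℝ)) (hA : A.SeparatesPoints)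
    (f : C(X, ℝ)) {ε : ℝ} (hε : 0 < ε) {x y : X} (hxy : x ≠ y) :
    ∃ g ∈ A, g x = f x ∧ g y = f y ∧ ‖f - g‖ < ε := by
  classical
  obtain ⟨u, huA, hux, huy⟩ := hA.strongly (fun z => if z = x then 1 else 0) x y
  simp only [if_neg hxy.symm] at hux huy
  set C := 1 + ‖u‖ + ‖1 - u‖
  have hC : 0 < C := by positivity
  obtain ⟨⟨g₀, hg₀A⟩, hg₀⟩ :=
    exists_mem_subalgebra_near_continuousMap_of_separatesPoints A hA f (ε / C) (by positivity)
  set d := f - g₀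
  have hd : ‖d‖ < ε / C := by rwa [norm_sub_rev]
  refine ⟨g₀ + d x • u + d y • (1 - u),
    A.add_mem (A.add_mem hg₀A (A.smul_mem huA _)) (A.smul_mem (A.sub_mem A.one_mem huA) _),
    by simp [d, hux], by simp [d, huy], ?_⟩
  have hdx : |d x| ≤ ‖d‖ := d.norm_coe_le_norm x
  have hdy : |d y| ≤ ‖d‖ := d.norm_coe_le_norm y
  calc ‖f - (g₀ + d x • u + d y • (1 - u))‖ = ‖d - d x • u - d y • (1 - u)‖ := by
        congr 1; simp only [d]; abel
    _ ≤ ‖d‖ + |d x| * ‖u‖ + |d y| * ‖1 - u‖ := by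
        refine (norm_sub_le _ _).trans (add_le_add ((norm_sub_le _ _).trans_eq ?_) ?_) <;>
          simp [norm_smul]
    _ ≤ ‖d‖ * C := by simp only [C]; nlinarith [norm_nonneg u, norm_nonneg (1 - u)]
    _ < ε := by rwa [lt_div_iff₀ hC] at hd

lemma p_eq_p_iff {x y : ℝ} : p x = p y ↔ ∃ n : ℤ, x = y + n := by
  simp only [p, Circle.exp_eq_exp]
  refine exists_congr fun n => ?_
  constructor <;> intro h
  · nlinarith [pi_pos]
  · rw [h]; ring

lemma p_injOn_Ico : Set.InjOn p (Set.Ico 0 1) := by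
  intro x ⟨hx0, hx1⟩ y ⟨hy0, hy1⟩ h
  obtain ⟨n, rfl⟩ := p_eq_p_iff.1 h
  obtain rfl : n = 0 := by
    have : (-1 : ℝ) < n ∧ (n : ℝ) < 1 := ⟨by linarith, by linarith⟩
    have : -1 < n ∧ n < 1 := by exact_mod_cast this
    omega
  simp

lemma p_fract (x : ℝ) : p (Int.fract x) = p x :=
  p_eq_p_iff.2 ⟨-⌊x⌋, by rw [Int.fract]; push_cast; ring⟩

lemma isCoveringMap_p : IsCoveringMap p :=
  Circle.isCoveringMap_exp.comp_homeomorph (Homeomorph.mulLeft₀ (2 * π) (by positivity))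

lemma α_zero : α 0 = 1 := by simp [α, p]

lemma α_surjective : Function.Surjective α := by
  intro z
  obtain ⟨x, rfl⟩ := Circle.exp_surjective z
  refine ⟨⟨Int.fract (x / (2 * π)), Int.fract_nonneg _, (Int.fract_lt_one _).le⟩, ?_⟩
  rw [α, p_fract, p]
  congr 1
  field_simp

lemma continuous_α : Continuous α :=
  isCoveringMap_p.continuous.comp continuous_subtype_val

lemma isQuotientMap_α : IsQuotientMap α :=
  .of_surjective_continuous α_surjective continuous_α

lemma eq_or_eq_of_α_eq {s t : I} (h : α s = α t) :
    s = t ∨ (s = 0 ∧ t = 1) ∨ (s = 1 ∧ t = 0) := by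
  obtain ⟨n, hn⟩ := p_eq_p_iff.1 h
  have hs := s.2; have ht := t.2
  simp only [Set.mem_Icc] at hs ht
  have : (-1 : ℝ) ≤ n ∧ (n : ℝ) ≤ 1 := ⟨by linarith, by linarith⟩
  obtain h | h | h : n = -1 ∨ n = 0 ∨ n = 1 := by
    have : -1 ≤ n ∧ n ≤ 1 := by exact_mod_cast this
    omega
  all_goals subst h; push_cast at hn
  · exact Or.inr <| Or.inl
      ⟨Set.Icc.coe_eq_zero.1 (by linarith), Set.Icc.coe_eq_one.1 (by linarith)⟩
  · exact Or.inl (Subtype.ext (by simpa using hn))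
  · exact Or.inr <| Or.inr
      ⟨Set.Icc.coe_eq_one.1 (by linarith), Set.Icc.coe_eq_zero.1 (by linarith)⟩

lemma exists_comp_α_eq_p_comp (h : C(I, ℝ)) (hper : p (h 1) = p (h 0)) :
    ∃ g : C(Circle, Circle), ∀ t, g (α t) = p (h t) := by
  let ph : C(I, Circle) := (⟨p, isCoveringMap_p.continuous⟩ : C(ℝ, Circle)).comp h
  have hα : IsQuotientMap (⟨α, continuous_α⟩ : C(I, Circle)) := isQuotientMap_α
  have hfactor : Function.FactorsThrough ph α := by
    intro s t hst
    rcases eq_or_eq_of_α_eq hst with rfl | ⟨rfl, rfl⟩ | ⟨rfl, rfl⟩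
    exacts [rfl, hper.symm, hper]
  exact ⟨hα.lift ph hfactor, DFunLike.congr_fun (hα.lift_comp ph hfactor)⟩

lemma eq_of_p_comp_eq {X : Type*} [TopologicalSpace X] [PreconnectedSpace X] {c d : C(X, ℝ)}
    (h : ∀ t, p (c t) = p (d t)) {x₀ : X} (h₀ : c x₀ = d x₀) : c = d :=
  DFunLike.coe_injective <|
    isCoveringMap_p.eq_of_comp_eq c.continuous d.continuous (funext h) x₀ h₀

theorem stmt16 (A : Subalgebra ℝ C(unitInterval, ℝ)) (hA : A.SeparatesPoints)
    (L : C(Circle, Circle) → C(unitInterval, ℝ))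
    (hlift : ∀ f, ∀ t, p (L f t) = f (α t))
    (hL0 : ∀ f, L f 0 ∈ Set.Ico (0 : ℝ) 1)
    (q : Circle) (qt : ℝ) (hqt : qt ∈ Set.Ico (0 : ℝ) 1) (hpq : p qt = q) (m : ℤ)
    (f : C(Circle, Circle)) (hfq : f 1 = q) (hW : L f 1 - L f 0 = m)
    (ε : ℝ) (hε : 0 < ε) :
    ∃ g : C(Circle, Circle), g 1 = q ∧ L g 1 - L g 0 = m ∧
      L g ∈ A ∧ L g 0 = qt ∧ L g 1 = qt + m ∧
      2 * π * ⨆ t, |L f t - L g t| < ε := by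
  have hLf0 : L f 0 = qt := p_injOn_Ico (hL0 f) hqt (by rw [hlift, α_zero, hfq, hpq])
  obtain ⟨h, hhA, hh0, hh1, hnear⟩ := ContinuousMap.exists_mem_subalgebra_near_agreeing_at
    A hA (L f) (div_pos hε two_pi_pos) (zero_ne_one : (0 : I) ≠ 1)
  rw [hLf0] at hh0
  rw [show L f 1 = qt + m by linarith] at hh1
  obtain ⟨g, hg⟩ := exists_comp_α_eq_p_comp h (p_eq_p_iff.2 ⟨m, by rw [hh0, hh1]⟩)
  have hLg : L g = h := eq_of_p_comp_eq (fun t => (hlift g t).trans (hg t)) (x₀ := 0) <|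
    p_injOn_Ico (hL0 g) (hh0 ▸ hqt) (by rw [hlift, hg])
  refine ⟨g, by rw [← α_zero, hg, hh0, hpq], by rw [hLg, hh0, hh1]; ring, hLg ▸ hhA,
    hLg ▸ hh0, hLg ▸ hh1, ?_⟩
  have hsup : ⨆ t, |L f t - L g t| = ‖L f - L g‖ := by
    simp only [ContinuousMap.norm_eq_iSup_norm, ContinuousMap.sub_apply, Real.norm_eq_abs]
  rwa [hsup, hLg, ← lt_div_iff₀' two_pi_pos]
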